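/- arXiv:1502.05056 — 5 statements merged into one kernel-verified Lean document; each statement's English description precedes it below -/
import Mathlib

section
/- (Proposition: SR dynamics coincides with multiplicative weights) Let W be any fitness matrix, P any population distribution, and r ∈ [0,1]. Then the SR update P' = SR_r(P) satisfies, for every i ∈ [n], Σ_j p'_{ij} = (Σ_j p_{ij} w_{ij}) / w̄(P). In particular, the first marginals of SR_r(P) do not depend on r, and for every i with x_i(P) > 0, x_i(SR_r(P)) = x_i(P) · g_i(P) / w̄(P). -/
open Finset

noncomputable section

/-- `P` is a population distribution: nonnegative entries summing to 1. -/
def IsPopDist {n m : ℕ} (P : Fin n → Fin m → ℝ) : Prop :=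
  (∀ i j, 0 ≤ P i j) ∧ (∑ i, ∑ j, P i j) = 1

/-- `W` is a fitness matrix: strictly positive entries. -/
def IsFitness {n m : ℕ} (W : Fin n → Fin m → ℝ) : Prop :=
  ∀ i j, 0 < W i j

/-- Average fitness w̄(P) = Σ_{i,j} p_{ij} w_{ij}. -/
def wbar {n m : ℕ} (W P : Fin n → Fin m → ℝ) : ℝ :=
  ∑ i, ∑ j, P i j * W i j

/-- First marginal x_i(P) = Σ_j p_{ij}. -/
def xmarg {n m : ℕ} (P : Fin n → Fin m → ℝ) (i : Fin n) : ℝ :=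
  ∑ j, P i j

/-- Second marginal y_j(P) = Σ_i p_{ij}. -/
def ymarg {n m : ℕ} (P : Fin n → Fin m → ℝ) (j : Fin m) : ℝ :=
  ∑ i, P i j

/-- Selection update p^S_{ij} = p_{ij} w_{ij} / w̄(P). -/
def pS {n m : ℕ} (W P : Fin n → Fin m → ℝ) (i : Fin n) (j : Fin m) : ℝ :=
  P i j * W i j / wbar W P

/-- Recombination-after-selection matrix
  p^{SR}_{ij} = (Σ_l p_{il} w_{il})(Σ_k p_{kj} w_{kj}) / w̄(P)². -/
def pSR {n m : ℕ} (W P : Fin n → Fin m → ℝ) (i : Fin n) (j : Fin m) : ℝ :=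
  (∑ l, P i l * W i l) * (∑ k, P k j * W k j) / (wbar W P) ^ 2

/-- SR update: r·p^{SR}_{ij} + (1−r)·p^S_{ij}. -/
def SRupd {n m : ℕ} (W P : Fin n → Fin m → ℝ) (r : ℝ) (i : Fin n) (j : Fin m) : ℝ :=
  r * pSR W P i j + (1 - r) * pS W P i j

/-- Conditional expected fitness g_i(P) = Σ_j (p_{ij}/x_i(P)) w_{ij}. -/
def gcond {n m : ℕ} (W P : Fin n → Fin m → ℝ) (i : Fin n) : ℝ :=
  ∑ j, (P i j / xmarg P i) * W i j

/-- Marginal expected fitness G_i(P) = Σ_j y_j(P) w_{ij}. -/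
def Gmarg {n m : ℕ} (W P : Fin n → Fin m → ℝ) (i : Fin n) : ℝ :=
  ∑ j, ymarg P j * W i j

/-- Normalizer w̄^R(P) = Σ_{i,j} w_{ij}(r·x_i y_j + (1−r)·p_{ij}). -/
def wbarR {n m : ℕ} (W P : Fin n → Fin m → ℝ) (r : ℝ) : ℝ :=
  ∑ i, ∑ j, W i j * (r * xmarg P i * ymarg P j + (1 - r) * P i j)

/-- RS update: w_{ij}(r·x_i y_j + (1−r)·p_{ij}) / w̄^R(P). -/
def RSupd {n m : ℕ} (W P : Fin n → Fin m → ℝ) (r : ℝ) (i : Fin n) (j : Fin m) : ℝ :=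
  W i j * (r * xmarg P i * ymarg P j + (1 - r) * P i j) / wbarR W P r

/-! Recombination only reshuffles the second locus, so it leaves the first marginal of the
selected population unchanged; hence every row sum of `SR_r(P)` is the row sum of the selection
update, whatever `r` is. -/

lemma mul_div_self_sq {G₀ : Type*} [CommGroupWithZero G₀] (a b : G₀) : a * b / b ^ 2 = a / b := by
  rw [mul_div_assoc, sq, div_self_mul_self', div_eq_mul_inv]

section Marginals

variable {n m : ℕ} (W P : Fin n → Fin m → ℝ)

lemma sum_sum_swap_eq_wbar : ∑ j, ∑ k, P k j * W k j = wbar W P :=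
  Finset.sum_comm

lemma sum_pS (i : Fin n) : ∑ j, pS W P i j = (∑ j, P i j * W i j) / wbar W P :=
  (Finset.sum_div _ _ _).symm

lemma sum_pSR (i : Fin n) : ∑ j, pSR W P i j = (∑ j, P i j * W i j) / wbar W P := by
  simp only [pSR]
  rw [← Finset.sum_div, ← Finset.mul_sum, sum_sum_swap_eq_wbar, mul_div_self_sq]

lemma sum_SRupd (r : ℝ) (i : Fin n) :
    ∑ j, SRupd W P r i j = (∑ j, P i j * W i j) / wbar W P := by
  simp only [SRupd]
  rw [Finset.sum_add_distrib, ← Finset.mul_sum, ← Finset.mul_sum, sum_pSR, sum_pS]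
  ring

lemma xmarg_mul_gcond {i : Fin n} (hx : xmarg P i ≠ 0) :
    xmarg P i * gcond W P i = ∑ j, P i j * W i j := by
  rw [gcond, Finset.mul_sum]
  refine Finset.sum_congr rfl fun j _ => ?_
  rw [div_mul_eq_mul_div, mul_div_cancel₀ _ hx]

end Marginals

theorem sr_dynamics_is_pw_general (n m : ℕ) (W P : Fin n → Fin m → ℝ) (r : ℝ) :
    (∀ i, ∑ j, SRupd W P r i j = (∑ j, P i j * W i j) / wbar W P) ∧
    (∀ i, 0 < xmarg P i →
      ∑ j, SRupd W P r i j = xmarg P i * gcond W P i / wbar W P) :=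
  ⟨sum_SRupd W P r, fun i hx => by rw [sum_SRupd, xmarg_mul_gcond W P hx.ne']⟩

/-- Proposition: SR dynamics coincides with multiplicative weights.
The first marginals of `SR_r(P)` equal `(Σ_j p_{ij} w_{ij}) / w̄(P)` independently of `r`,
and for `x_i(P) > 0` they equal `x_i(P)·g_i(P)/w̄(P)`. -/
theorem sr_dynamics_is_pw (n m : ℕ) (hn : 1 ≤ n) (hm : 1 ≤ m)
    (W P : Fin n → Fin m → ℝ) (hW : IsFitness W) (hP : IsPopDist P)
    (r : ℝ) (hr : r ∈ Set.Icc (0 : ℝ) 1) :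
    (∀ i, ∑ j, SRupd W P r i j = (∑ j, P i j * W i j) / wbar W P) ∧
    (∀ i, 0 < xmarg P i →
      ∑ j, SRupd W P r i j = xmarg P i * gcond W P i / wbar W P) :=
  sr_dynamics_is_pw_general n m W P r
end
end

section
/- (Corollary: marginals of the SR population dynamics equal the parameter-free PW(0) iterates) Let W be a fitness matrix, r ∈ [0,1], and P⁰ a population distribution with x_i(P⁰) > 0 for all i ∈ [n]. Define P^{t+1} = SR_r(P^t) for all t ≥ 0, and define X : ℕ → ℝ^n by X⁰_i = x_i(P⁰) and X^{t+1}_i = X^t_i · g_i(P^t) / w̄(P^t) (the parameter-free Polynomial Weights update using the conditional expected fitnesses). Then for every t ≥ 0 and every i ∈ [n], x_i(P^t) > 0 and X^t_i = x_i(P^t) = Σ_j p^t_{ij}. -/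
open Finset

noncomputable section

lemma marg_SR {n m : ℕ} (W P : Fin n → Fin m → ℝ) (r : ℝ)
    (hw : wbar W P ≠ 0) (i : Fin n) :
    ∑ j, SRupd W P r i j = (∑ j, P i j * W i j) / wbar W P := by
  have h1 : ∑ j, pSR W P i j = (∑ l, P i l * W i l) / wbar W P := by
    unfold pSR
    rw [← Finset.sum_div, ← Finset.mul_sum]
    have hc : (∑ j, ∑ k, P k j * W k j) = wbar W P := by
      rw [wbar]; exact Finset.sum_comm
    rw [hc, sq, mul_div_mul_right _ _ hw]
  have h2 : ∑ j, pS W P i j = (∑ j, P i j * W i j) / wbar W P := by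
    rw [Finset.sum_div]; rfl
  unfold SRupd
  rw [Finset.sum_add_distrib, ← Finset.mul_sum, ← Finset.mul_sum, h1, h2]
  ring

/-- Corollary: marginals of the SR population dynamics equal the
parameter-free PW(0) iterates. -/
theorem sr_marginals_eq_pw_iterates (n m : ℕ) (hn : 1 ≤ n) (hm : 1 ≤ m)
    (W : Fin n → Fin m → ℝ) (hW : IsFitness W)
    (r : ℝ) (hr : r ∈ Set.Icc (0 : ℝ) 1)
    (Ppop : ℕ → Fin n → Fin m → ℝ)
    (hP0 : IsPopDist (Ppop 0))
    (hx0 : ∀ i, 0 < xmarg (Ppop 0) i)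
    (hstep : ∀ t, Ppop (t + 1) = fun i j => SRupd W (Ppop t) r i j)
    (X : ℕ → Fin n → ℝ)
    (hX0 : ∀ i, X 0 i = xmarg (Ppop 0) i)
    (hXstep : ∀ t i, X (t + 1) i = X t i * gcond W (Ppop t) i / wbar W (Ppop t)) :
    ∀ t i, 0 < xmarg (Ppop t) i ∧ X t i = xmarg (Ppop t) i := by
  obtain ⟨hr0, hr1⟩ := hr
  have hnne : Nonempty (Fin n) := ⟨⟨0, hn⟩⟩
  suffices H : ∀ t, (∀ i j, 0 ≤ Ppop t i j) ∧ (∀ i, 0 < xmarg (Ppop t) i) ∧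
      (∀ i, X t i = xmarg (Ppop t) i) by
    intro t i; exact ⟨(H t).2.1 i, (H t).2.2 i⟩
  intro t
  induction t with
  | zero => exact ⟨hP0.1, hx0, hX0⟩
  | succ t ih =>
    obtain ⟨hnn, hpos, hXeq⟩ := ih
    set P := Ppop t with hPdef
    -- row sums of selected fitness are positive
    have hS : ∀ i, 0 < ∑ j, P i j * W i j := by
      intro i
      have hx := hpos i
      rw [xmarg] at hx
      obtain ⟨j, _, hj⟩ := Finset.exists_lt_of_sum_lt (by simpa using hx :
        (∑ j : Fin m, (0 : ℝ)) < ∑ j, P i j)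
      exact Finset.sum_pos' (fun j _ => mul_nonneg (hnn i j) (hW i j).le)
        ⟨j, Finset.mem_univ j, mul_pos hj (hW i j)⟩
    have hwpos : 0 < wbar W P := Finset.sum_pos (fun i _ => hS i) Finset.univ_nonempty
    have hwne : wbar W P ≠ 0 := ne_of_gt hwpos
    have hmarg : ∀ i, xmarg (Ppop (t + 1)) i = (∑ j, P i j * W i j) / wbar W P := by
      intro i
      rw [xmarg, hstep t]
      exact marg_SR W P r hwne i
    have hTnn : ∀ j, 0 ≤ ∑ k, P k j * W k j := fun j =>
      Finset.sum_nonneg fun k _ => mul_nonneg (hnn k j) (hW k j).le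
    refine ⟨?_, ?_, ?_⟩
    · intro i j
      rw [hstep t]
      have h1 : 0 ≤ pSR W P i j := by
        unfold pSR
        exact div_nonneg (mul_nonneg (hS i).le (hTnn j)) (by positivity)
      have h2 : 0 ≤ pS W P i j := by
        unfold pS
        exact div_nonneg (mul_nonneg (hnn i j) (hW i j).le) hwpos.le
      exact add_nonneg (mul_nonneg hr0 h1) (mul_nonneg (by linarith) h2)
    · intro i
      rw [hmarg i]
      exact div_pos (hS i) hwpos
    · intro i
      rw [hXstep t i, hXeq i, hmarg i]
      have hxne : xmarg P i ≠ 0 := ne_of_gt (hpos i)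
      have : xmarg P i * gcond W P i = ∑ j, P i j * W i j := by
        rw [gcond, Finset.mul_sum]
        refine Finset.sum_congr rfl fun j _ => ?_
        field_simp
      rw [this]
end
end

section
/- (Corollary: marginals of the RS population dynamics equal the parameter-free PW(r) iterates) Let W be a fitness matrix, r ∈ [0,1], and P⁰ a population distribution with x_i(P⁰) > 0 for all i ∈ [n]. Define P^{t+1} = RS_r(P^t) for all t ≥ 0, and define X : ℕ → ℝ^n by X⁰_i = x_i(P⁰) and X^{t+1}_i = X^t_i · (r·G_i(P^t) + (1−r)·g_i(P^t)) / w̄^R(P^t) (the parameter-free PW(r) update). Then for every t ≥ 0 and every i ∈ [n], x_i(P^t) > 0 and X^t_i = x_i(P^t) = Σ_j p^t_{ij}. -/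
open Finset

noncomputable section

section Aux

variable {n m : ℕ}

lemma aux_exists_pos (P : Fin n → Fin m → ℝ) (hP : IsPopDist P) :
    ∃ i j, 0 < P i j := by
  by_contra h
  push_neg at h
  have : (∑ i, ∑ j, P i j) = 0 := by
    apply Finset.sum_eq_zero; intro i _
    exact Finset.sum_eq_zero fun j _ => le_antisymm (h i j) (hP.1 i j)
  rw [hP.2] at this; norm_num at this

lemma aux_ysum (P : Fin n → Fin m → ℝ) (hP : IsPopDist P) :
    (∑ j, ymarg P j) = 1 := by
  unfold ymarg; rw [Finset.sum_comm]; exact hP.2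

lemma aux_y_nonneg (P : Fin n → Fin m → ℝ) (hP : IsPopDist P) (j : Fin m) :
    0 ≤ ymarg P j :=
  Finset.sum_nonneg fun i _ => hP.1 i j

lemma aux_exists_ypos (P : Fin n → Fin m → ℝ) (hP : IsPopDist P) :
    ∃ j, 0 < ymarg P j := by
  by_contra h
  push_neg at h
  have : (∑ j, ymarg P j) = 0 :=
    Finset.sum_eq_zero fun j _ => le_antisymm (h j) (aux_y_nonneg P hP j)
  rw [aux_ysum P hP] at this; norm_num at this

lemma aux_term_nonneg (W P : Fin n → Fin m → ℝ) (hW : IsFitness W)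
    {r : ℝ} (hr : r ∈ Set.Icc (0 : ℝ) 1)
    (hP : IsPopDist P) (hx : ∀ i, 0 < xmarg P i) (i : Fin n) (j : Fin m) :
    0 ≤ W i j * (r * xmarg P i * ymarg P j + (1 - r) * P i j) := by
  obtain ⟨hr0, hr1⟩ := hr
  apply mul_nonneg (hW i j).le
  have := aux_y_nonneg P hP j
  have := hP.1 i j
  have := (hx i).le
  have h1 : (0:ℝ) ≤ r * xmarg P i * ymarg P j := by positivity
  nlinarith

lemma aux_wbarR_pos (hn : 1 ≤ n) (W P : Fin n → Fin m → ℝ) (hW : IsFitness W)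
    {r : ℝ} (hr : r ∈ Set.Icc (0 : ℝ) 1)
    (hP : IsPopDist P) (hx : ∀ i, 0 < xmarg P i) :
    0 < wbarR W P r := by
  obtain ⟨hr0, hr1⟩ := hr
  have hterm := aux_term_nonneg W P hW ⟨hr0, hr1⟩ hP hx
  unfold wbarR
  rcases eq_or_lt_of_le hr0 with hrz | hrpos
  · obtain ⟨i, j, hij⟩ := aux_exists_pos P hP
    apply Finset.sum_pos' (fun i _ => Finset.sum_nonneg fun j _ => hterm i j)
    refine ⟨i, Finset.mem_univ _, Finset.sum_pos' (fun j _ => hterm _ j)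
      ⟨j, Finset.mem_univ _, ?_⟩⟩
    apply mul_pos (hW i j)
    have hy := aux_y_nonneg P hP j
    have hx' := (hx i).le
    have : (0:ℝ) ≤ r * xmarg P i * ymarg P j := by positivity
    nlinarith
  · obtain ⟨j, hj⟩ := aux_exists_ypos P hP
    set i0 : Fin n := ⟨0, by omega⟩
    apply Finset.sum_pos' (fun i _ => Finset.sum_nonneg fun j _ => hterm i j)
    refine ⟨i0, Finset.mem_univ _, Finset.sum_pos' (fun j _ => hterm _ j)
      ⟨j, Finset.mem_univ _, ?_⟩⟩
    apply mul_pos (hW i0 j)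
    have hp := hP.1 i0 j
    have h1 : 0 < r * xmarg P i0 * ymarg P j := by
      have := hx i0; positivity
    nlinarith

/-- x marginal of the RS update. -/
lemma aux_xmarg_upd (W P : Fin n → Fin m → ℝ)
    (r : ℝ) (hx : ∀ i, 0 < xmarg P i) (i : Fin n) :
    xmarg (fun i j => RSupd W P r i j) i
      = xmarg P i * (r * Gmarg W P i + (1 - r) * gcond W P i) / wbarR W P r := by
  unfold xmarg RSupd Gmarg gcond
  set s := xmarg P i with hs
  rw [← Finset.sum_div]
  congr 1
  have hxne : s ≠ 0 := (hx i).ne'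
  rw [Finset.mul_sum, Finset.mul_sum, mul_add, Finset.mul_sum, Finset.mul_sum,
    ← Finset.sum_add_distrib]
  apply Finset.sum_congr rfl
  intro j _
  field_simp
  simp only [hs]
  unfold xmarg
  ring

/-- The RS update of a positive-marginal population distribution is again one. -/
lemma aux_upd_popdist (hn : 1 ≤ n) (W P : Fin n → Fin m → ℝ) (hW : IsFitness W)
    {r : ℝ} (hr : r ∈ Set.Icc (0 : ℝ) 1)
    (hP : IsPopDist P) (hx : ∀ i, 0 < xmarg P i) :
    IsPopDist (fun i j => RSupd W P r i j) := by
  have hwpos := aux_wbarR_pos hn W P hW hr hP hx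
  constructor
  · intro i j
    exact div_nonneg (aux_term_nonneg W P hW hr hP hx i j) hwpos.le
  · unfold RSupd
    rw [show (∑ i, ∑ j, W i j * (r * xmarg P i * ymarg P j + (1 - r) * P i j) / wbarR W P r)
        = (∑ i, ∑ j, W i j * (r * xmarg P i * ymarg P j + (1 - r) * P i j)) / wbarR W P r by
      rw [Finset.sum_div]; exact Finset.sum_congr rfl fun i _ => (Finset.sum_div ..).symm]
    rw [show (∑ i, ∑ j, W i j * (r * xmarg P i * ymarg P j + (1 - r) * P i j)) = wbarR W P r from rfl]
    exact div_self hwpos.ne'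

lemma aux_xmarg_upd_pos (hn : 1 ≤ n) (W P : Fin n → Fin m → ℝ) (hW : IsFitness W)
    {r : ℝ} (hr : r ∈ Set.Icc (0 : ℝ) 1)
    (hP : IsPopDist P) (hx : ∀ i, 0 < xmarg P i) (i : Fin n) :
    0 < xmarg (fun i j => RSupd W P r i j) i := by
  obtain ⟨hr0, hr1⟩ := hr
  rw [aux_xmarg_upd W P r hx i]
  have hwpos := aux_wbarR_pos hn W P hW ⟨hr0, hr1⟩ hP hx
  apply div_pos _ hwpos
  apply mul_pos (hx i)
  -- Gmarg > 0 and gcond > 0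
  have hG : 0 < Gmarg W P i := by
    obtain ⟨j, hj⟩ := aux_exists_ypos P hP
    apply Finset.sum_pos' (fun j _ => mul_nonneg (aux_y_nonneg P hP j) (hW i j).le)
    exact ⟨j, Finset.mem_univ _, mul_pos hj (hW i j)⟩
  have hg : 0 < gcond W P i := by
    have hpij : ∃ j, 0 < P i j := by
      by_contra h
      push_neg at h
      have : xmarg P i = 0 :=
        Finset.sum_eq_zero fun j _ => le_antisymm (h j) (hP.1 i j)
      exact absurd this (hx i).ne'
    obtain ⟨j, hj⟩ := hpij
    apply Finset.sum_pos'
      (fun j _ => mul_nonneg (div_nonneg (hP.1 i j) (hx i).le) (hW i j).le)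
    exact ⟨j, Finset.mem_univ _, mul_pos (div_pos hj (hx i)) (hW i j)⟩
  have hmin := lt_min hG hg
  nlinarith [mul_le_mul_of_nonneg_left (min_le_left (Gmarg W P i) (gcond W P i)) hr0,
    mul_le_mul_of_nonneg_left (min_le_right (Gmarg W P i) (gcond W P i))
      (by linarith : (0:ℝ) ≤ 1 - r)]

end Aux

/-- Corollary: marginals of the RS population dynamics equal the
parameter-free PW(r) iterates. -/
theorem rs_marginals_eq_pw_r_iterates (n m : ℕ) (hn : 1 ≤ n) (hm : 1 ≤ m)
    (W : Fin n → Fin m → ℝ) (hW : IsFitness W)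
    (r : ℝ) (hr : r ∈ Set.Icc (0 : ℝ) 1)
    (Ppop : ℕ → Fin n → Fin m → ℝ)
    (hP0 : IsPopDist (Ppop 0))
    (hx0 : ∀ i, 0 < xmarg (Ppop 0) i)
    (hstep : ∀ t, Ppop (t + 1) = fun i j => RSupd W (Ppop t) r i j)
    (X : ℕ → Fin n → ℝ)
    (hX0 : ∀ i, X 0 i = xmarg (Ppop 0) i)
    (hXstep : ∀ t i, X (t + 1) i =
      X t i * (r * Gmarg W (Ppop t) i + (1 - r) * gcond W (Ppop t) i) / wbarR W (Ppop t) r) :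
    ∀ t i, 0 < xmarg (Ppop t) i ∧ X t i = xmarg (Ppop t) i := by
  suffices h : ∀ t, IsPopDist (Ppop t) ∧ (∀ i, 0 < xmarg (Ppop t) i) ∧
      (∀ i, X t i = xmarg (Ppop t) i) by
    exact fun t i => ⟨(h t).2.1 i, (h t).2.2 i⟩
  intro t
  induction t with
  | zero => exact ⟨hP0, hx0, hX0⟩
  | succ t ih =>
    obtain ⟨hPt, hxt, hXt⟩ := ih
    have hstep' := hstep t
    refine ⟨?_, ?_, ?_⟩
    · rw [hstep']; exact aux_upd_popdist hn W (Ppop t) hW hr hPt hxt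
    · intro i; rw [hstep']; exact aux_xmarg_upd_pos hn W (Ppop t) hW hr hPt hxt i
    · intro i
      rw [hXstep t i, hXt i, hstep', aux_xmarg_upd W (Ppop t) r hxt i]
end
end

section
/- (SR and RS updates have identical marginals on product distributions) Let W be any fitness matrix and let P be a product population distribution, i.e. p_{ij} = x_i(P)·y_j(P) for all i,j. Then for any recombination rates r, r' ∈ [0,1] and every i ∈ [n], Σ_j (SR_r(P))_{ij} = Σ_j (RS_{r'}(P))_{ij} = x_i(P)·(Σ_j y_j(P) w_{ij}) / w̄(P), and symmetrically for every j ∈ [m], Σ_i (SR_r(P))_{ij} = Σ_i (RS_{r'}(P))_{ij} = y_j(P)·(Σ_i x_i(P) w_{ij}) / w̄(P). -/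
open Finset

noncomputable section

/-! Recombination after selection only redistributes the selected mass inside each row and column,
so the marginals of `SR_r` are those of pure selection whatever `r` is. On a product distribution
`x_i y_j = p_ij`, so recombination before selection changes nothing and `RS_r` is pure selection. -/

variable {n m : ℕ} (W P : Fin n → Fin m → ℝ)

-- `w̄ / w̄² = 1 / w̄` holds also at `w̄ = 0`, where both sides are junk zeros.
theorem sum_pSR_row_eq_sum_pS_row (i : Fin n) : ∑ j, pSR W P i j = ∑ j, pS W P i j := by
  have hcol : ∑ j, ∑ k, P k j * W k j = wbar W P := by rw [wbar, sum_comm]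
  simp only [pSR, pS, ← sum_div, ← mul_sum, hcol]
  rw [mul_div_assoc, sq, div_self_mul_self', div_eq_mul_inv]

theorem sum_pSR_col_eq_sum_pS_col (j : Fin m) : ∑ i, pSR W P i j = ∑ i, pS W P i j := by
  simp only [pSR, pS, ← sum_div, ← sum_mul]
  rw [show ∑ i, ∑ l, P i l * W i l = wbar W P from rfl, mul_comm, mul_div_assoc, sq,
    div_self_mul_self', div_eq_mul_inv]

theorem sum_SRupd_row_eq_sum_pS_row (r : ℝ) (i : Fin n) :
    ∑ j, SRupd W P r i j = ∑ j, pS W P i j := by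
  simp only [SRupd, sum_add_distrib, ← mul_sum, sum_pSR_row_eq_sum_pS_row]
  ring

theorem sum_SRupd_col_eq_sum_pS_col (r : ℝ) (j : Fin m) :
    ∑ i, SRupd W P r i j = ∑ i, pS W P i j := by
  simp only [SRupd, sum_add_distrib, ← mul_sum, sum_pSR_col_eq_sum_pS_col]
  ring

variable {P}

theorem wbarR_eq_wbar_of_product (hprod : ∀ i j, P i j = xmarg P i * ymarg P j) (r : ℝ) :
    wbarR W P r = wbar W P := by
  unfold wbarR wbar
  refine sum_congr rfl fun i _ => sum_congr rfl fun j _ => ?_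
  rw [hprod i j]
  ring

theorem RSupd_eq_pS_of_product (hprod : ∀ i j, P i j = xmarg P i * ymarg P j) (r : ℝ)
    (i : Fin n) (j : Fin m) : RSupd W P r i j = pS W P i j := by
  rw [RSupd, pS, wbarR_eq_wbar_of_product W hprod, hprod i j]
  ring

theorem sum_pS_row_of_product (hprod : ∀ i j, P i j = xmarg P i * ymarg P j) (i : Fin n) :
    ∑ j, pS W P i j = xmarg P i * (∑ j, ymarg P j * W i j) / wbar W P := by
  simp only [pS, ← sum_div, mul_sum]
  congr 1
  refine sum_congr rfl fun j _ => ?_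
  rw [hprod i j]
  ring

theorem sum_pS_col_of_product (hprod : ∀ i j, P i j = xmarg P i * ymarg P j) (j : Fin m) :
    ∑ i, pS W P i j = ymarg P j * (∑ i, xmarg P i * W i j) / wbar W P := by
  simp only [pS, ← sum_div, mul_sum]
  congr 1
  refine sum_congr rfl fun i _ => ?_
  rw [hprod i j]
  ring

theorem sr_rs_same_marginals_on_product_general (n m : ℕ)
    (W P : Fin n → Fin m → ℝ)
    (hprod : ∀ i j, P i j = xmarg P i * ymarg P j) :
    ∀ r ∈ Set.Icc (0 : ℝ) 1, ∀ r' ∈ Set.Icc (0 : ℝ) 1,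
      (∀ i, ∑ j, SRupd W P r i j = xmarg P i * (∑ j, ymarg P j * W i j) / wbar W P ∧
            ∑ j, RSupd W P r' i j = xmarg P i * (∑ j, ymarg P j * W i j) / wbar W P) ∧
      (∀ j, ∑ i, SRupd W P r i j = ymarg P j * (∑ i, xmarg P i * W i j) / wbar W P ∧
            ∑ i, RSupd W P r' i j = ymarg P j * (∑ i, xmarg P i * W i j) / wbar W P) := by
  intro r _ r' _
  simp only [sum_SRupd_row_eq_sum_pS_row, sum_SRupd_col_eq_sum_pS_col,
    RSupd_eq_pS_of_product W hprod, sum_pS_row_of_product W hprod,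
    sum_pS_col_of_product W hprod, and_self, implies_true]

/-- SR and RS updates have identical marginals on product distributions. -/
theorem sr_rs_same_marginals_on_product (n m : ℕ) (hn : 1 ≤ n) (hm : 1 ≤ m)
    (W P : Fin n → Fin m → ℝ) (hW : IsFitness W) (hP : IsPopDist P)
    (hprod : ∀ i j, P i j = xmarg P i * ymarg P j) :
    ∀ r ∈ Set.Icc (0 : ℝ) 1, ∀ r' ∈ Set.Icc (0 : ℝ) 1,
      (∀ i, ∑ j, SRupd W P r i j = xmarg P i * (∑ j, ymarg P j * W i j) / wbar W P ∧
            ∑ j, RSupd W P r' i j = xmarg P i * (∑ j, ymarg P j * W i j) / wbar W P) ∧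
      (∀ j, ∑ i, SRupd W P r i j = ymarg P j * (∑ i, xmarg P i * W i j) / wbar W P ∧
            ∑ i, RSupd W P r' i j = ymarg P j * (∑ i, xmarg P i * W i j) / wbar W P) :=
  sr_rs_same_marginals_on_product_general n m W P hprod
end
end

section
/- (The RS dynamics leaves the Wright manifold, even under weak selection) For every s ∈ (0,1), there exist n = m = 2, a fitness matrix W with w_{ij} ∈ [1−s, 1+s] for all i,j, and a product population distribution P (i.e. p_{ij} = x_i(P)·y_j(P) for all i,j), such that for every r ∈ [0,1] the RS update RS_r(P) is NOT a product distribution, i.e. there exist i,j with (RS_r(P))_{ij} ≠ (Σ_{j'} (RS_r(P))_{ij'})·(Σ_{i'} (RS_r(P))_{i'j}). -/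
open Finset

noncomputable section

/-- The RS dynamics leaves the Wright manifold, even under weak selection. -/
theorem rs_leaves_wright_manifold :
    ∀ s ∈ Set.Ioo (0 : ℝ) 1,
      ∃ W P : Fin 2 → Fin 2 → ℝ,
        IsFitness W ∧ (∀ i j, W i j ∈ Set.Icc (1 - s) (1 + s)) ∧
        IsPopDist P ∧ (∀ i j, P i j = xmarg P i * ymarg P j) ∧
        ∀ r ∈ Set.Icc (0 : ℝ) 1,
          ∃ i j, RSupd W P r i j ≠
            (∑ j', RSupd W P r i j') * (∑ i', RSupd W P r i' j) := by
  intro s hs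
  obtain ⟨hs0, hs1⟩ := hs
  refine ⟨fun i j => if i = 0 ∧ j = 0 then 1 + s else 1, fun _ _ => 1/4,
    ?_, ?_, ?_, ?_, ?_⟩
  · intro i j; dsimp only; split <;> norm_num <;> linarith
  · intro i j; dsimp only; split <;> constructor <;> norm_num <;> linarith
  · exact ⟨fun _ _ => by norm_num, by simp [Fin.sum_univ_two]; norm_num⟩
  · intro i j; simp [xmarg, ymarg, Fin.sum_univ_two]; norm_num
  · intro r hr
    refine ⟨0, 0, ?_⟩
    have hD : (4 : ℝ) + s ≠ 0 := by linarith
    simp only [RSupd, wbarR, xmarg, ymarg, Fin.sum_univ_two]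
    norm_num
    intro h
    have hq : r * (1/2) * (1/2) + (1-r) * (1/4) = 1/4 := by ring
    rw [hq] at h
    field_simp at h
    nlinarith [sq_nonneg s, hs0]
end
end
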